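/- Let Γ ⊆ P_si(Σ^k) be a convex set of shift-invariant measures with B(Γ) nonempty. If there exists ω ∈ B(Γ) with |ω| ≥ k, then B(Γ) is infinite; specifically, writing ω = αβ with β its (k−1)-suffix, the word α^n β lies in B(Γ) for every n ≥ 1, and hence cap(B(Γ)) ≥ 0. -/

import Mathlib

open Finset

def occCount {A : Type*} [DecidableEq A] (k : ℕ) (ω : List A) (φ : Fin k → A) : ℕ :=
  ((Finset.range (ω.length - k + 1)).filter
    (fun i => ∀ j : Fin k, ω[i + (j : ℕ)]? = some (φ j))).card

noncomputable def freq {A : Type*} [DecidableEq A] (k : ℕ) (ω : List A) (φ : Fin k → A) : ℝ :=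
  (occCount k ω φ : ℝ) / ((ω.length - k + 1 : ℕ) : ℝ)

def IsProbVec {A : Type*} [Fintype A] {k : ℕ} (η : (Fin k → A) → ℝ) : Prop :=
  (∀ φ, 0 ≤ η φ) ∧ ∑ φ : Fin k → A, η φ = 1

def ShiftInv {A : Type*} [Fintype A] (k : ℕ) (η : (Fin (k + 2) → A) → ℝ) : Prop :=
  ∀ ψ : Fin (k + 1) → A, ∑ a : A, η (Fin.cons a ψ) = ∑ a : A, η (Fin.snoc ψ a)

def genFrom {A V : Type*} (E : V → V → A → Prop) (ω : List A) : Prop :=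
  ∃ f : Fin (ω.length + 1) → V, ∀ i : Fin ω.length, E (f i.castSucc) (f i.succ) (ω.get i)

noncomputable def capacity {A : Type*} (T : Set (List A)) : ℝ :=
  Filter.atTop.limsup fun n : ℕ =>
    Real.logb 2 (Nat.card {ω : List A // ω ∈ T ∧ ω.length = n}) / n

def memGammaEps {A : Type*} [Fintype A] [DecidableEq A] {k : ℕ}
    (Γ : Set ((Fin k → A) → ℝ)) (ε : ℝ) (η : (Fin k → A) → ℝ) : Prop :=
  IsProbVec η ∧ ∃ δ, ε < δ ∧ ∀ μ : (Fin k → A) → ℝ, IsProbVec μ → μ ∉ Γ → δ ≤ ‖η - μ‖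

/-! If `freq (k + 2) ω` is shift invariant, then summing the `(k + 2)`-block counts over the first,
resp. the last letter shows that a `(k + 1)`-block `ψ` occurs as often at positions `1, …, a` as at
positions `0, …, a - 1`, where `a = |ω| - (k + 1)`; hence `ψ` occurs at `0` iff it occurs at `a`.
Taking for `ψ` the last `k + 1` letters `β` of `ω = αβ`, the word `β` is also a prefix of `αβ`.
Then `αⁿβ` is `|α|`-periodic along its whole length, so each of its `n |α|` windows of length
`k + 2` reads like the window of `αβ` at the same position mod `|α|`: every block count gets
multiplied by `n`, and the frequency vector does not change. -/

-- Reducible, so that `occCount` is literally a filter by `OccursAt`.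
abbrev OccursAt {A : Type*} (ω : List A) {m : ℕ} (φ : Fin m → A) (i : ℕ) : Prop :=
  ∀ j : Fin m, ω[i + (j : ℕ)]? = some (φ j)

section Occurrences

variable {A : Type*}

theorem occursAt_cons_iff {m : ℕ} (ω : List A) (x : A) (ψ : Fin m → A) (i : ℕ) :
    OccursAt ω (Fin.cons x ψ : Fin (m + 1) → A) i ↔ ω[i]? = some x ∧ OccursAt ω ψ (i + 1) := by
  simp [OccursAt, Fin.forall_fin_succ, add_assoc, add_comm 1]

theorem occursAt_snoc_iff {m : ℕ} (ω : List A) (ψ : Fin m → A) (x : A) (i : ℕ) :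
    OccursAt ω (Fin.snoc ψ x : Fin (m + 1) → A) i ↔ ω[i + m]? = some x ∧ OccursAt ω ψ i := by
  simp [OccursAt, Fin.forall_fin_succ', and_comm]

variable [DecidableEq A]

theorem sum_card_filter_getElem?_eq_some_and [Fintype A] (ω : List A) (s : Finset ℕ) (g : ℕ → ℕ)
    (p : ℕ → Prop) [DecidablePred p] :
    ∑ x : A, #{i ∈ s | ω[g i]? = some x ∧ p i} = #{i ∈ s | g i < ω.length ∧ p i} := by
  simp only [card_filter]
  rw [Finset.sum_comm]
  refine Finset.sum_congr rfl fun i _ => ?_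
  by_cases hi : g i < ω.length <;> by_cases hp : p i <;> simp [hi, hp]

theorem sum_occCount_cons [Fintype A] {m : ℕ} (ω : List A) (hm : m + 1 ≤ ω.length)
    (ψ : Fin m → A) :
    ∑ x : A, occCount (m + 1) ω (Fin.cons x ψ) =
      #{i ∈ range (ω.length - m) | OccursAt ω ψ (i + 1)} := by
  simp only [occCount, occursAt_cons_iff, sum_card_filter_getElem?_eq_some_and]
  rw [show ω.length - (m + 1) + 1 = ω.length - m by omega]
  congr 1
  exact Finset.filter_congr fun i hi => and_iff_right (by rw [Finset.mem_range] at hi; omega)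

theorem sum_occCount_snoc [Fintype A] {m : ℕ} (ω : List A) (hm : m + 1 ≤ ω.length)
    (ψ : Fin m → A) :
    ∑ x : A, occCount (m + 1) ω (Fin.snoc ψ x) =
      #{i ∈ range (ω.length - m) | OccursAt ω ψ i} := by
  simp only [occCount, occursAt_snoc_iff, sum_card_filter_getElem?_eq_some_and]
  rw [show ω.length - (m + 1) + 1 = ω.length - m by omega]
  congr 1
  exact Finset.filter_congr fun i hi => and_iff_right (by rw [Finset.mem_range] at hi; omega)

theorem occursAt_zero_iff_of_sum_occCount_cons_eq_snoc [Fintype A] {m : ℕ} (ω : List A)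
    (hm : m + 1 ≤ ω.length) (ψ : Fin m → A)
    (h : ∑ x : A, occCount (m + 1) ω (Fin.cons x ψ) = ∑ x : A, occCount (m + 1) ω (Fin.snoc ψ x)) :
    OccursAt ω ψ 0 ↔ OccursAt ω ψ (ω.length - m) := by
  have key : (if OccursAt ω ψ 0 then 1 else 0 : ℕ) =
      if OccursAt ω ψ (ω.length - m) then 1 else 0 := by
    have := Finset.sum_range_succ' (fun i => if OccursAt ω ψ i then 1 else 0) (ω.length - m)
    rw [Finset.sum_range_succ] at this
    rw [sum_occCount_cons ω hm, sum_occCount_snoc ω hm, card_filter, card_filter] at h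
    omega
  split_ifs at key with h0 hL hL
  · exact iff_of_true h0 hL
  · exact iff_of_false h0 hL

end Occurrences

theorem sum_occCount_cons_eq_snoc_of_shiftInv {A : Type*} [Fintype A] [DecidableEq A] {k : ℕ}
    {ω : List A} (h : ShiftInv k (freq (k + 2) ω)) (ψ : Fin (k + 1) → A) :
    ∑ x : A, occCount (k + 2) ω (Fin.cons x ψ) = ∑ x : A, occCount (k + 2) ω (Fin.snoc ψ x) := by
  have hd : ((ω.length - (k + 2) + 1 : ℕ) : ℝ) ≠ 0 := by positivity
  have := h ψ
  simp only [freq, ← Finset.sum_div, div_left_inj' hd] at this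
  exact_mod_cast this

theorem drop_isPrefix_of_shiftInv {A : Type*} [Fintype A] [DecidableEq A] {k : ℕ} {ω : List A}
    (hlen : k + 2 ≤ ω.length) (h : ShiftInv k (freq (k + 2) ω)) :
    ω.drop (ω.length - (k + 1)) <+: ω := by
  set β := ω.drop (ω.length - (k + 1))
  have hβlen : β.length = k + 1 := by simp [β]; omega
  let ψ : Fin (k + 1) → A := fun j => β.get (Fin.cast hβlen.symm j)
  have hsuffix : OccursAt ω ψ (ω.length - (k + 1)) := fun j => by
    simp [ψ, β, List.getElem_drop]
  have hprefix : OccursAt ω ψ 0 :=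
    (occursAt_zero_iff_of_sum_occCount_cons_eq_snoc ω hlen ψ
      (sum_occCount_cons_eq_snoc_of_shiftInv h ψ)).2 hsuffix
  refine List.prefix_iff_getElem?.2 fun i hi => ?_
  simpa [ψ] using hprefix ⟨i, hβlen ▸ hi⟩

theorem card_filter_mod_range_mul (p : ℕ → Prop) [DecidablePred p] (a n : ℕ) :
    #{i ∈ range (n * a) | p (i % a)} = n * #{i ∈ range a | p i} := by
  simp only [card_filter]
  induction n with
  | zero => simp
  | succ n ih =>
    rw [add_one_mul, Finset.sum_range_add, ih, add_one_mul]
    congr 1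
    refine Finset.sum_congr rfl fun i hi => ?_
    rw [add_comm, Nat.add_mul_mod_self_right, Nat.mod_eq_of_lt (Finset.mem_range.mp hi)]

section Periodic

variable {A : Type*} {α β : List A}

theorem getElem?_eq_getElem?_mod_of_prefix_append (hα : α ≠ []) (h : β <+: α ++ β) :
    ∀ j < β.length, β[j]? = α[j % α.length]? := by
  have hp : 0 < α.length := List.length_pos_iff.mpr hα
  intro j
  induction j using Nat.strong_induction_on with
  | _ j ih =>
    intro hj
    rw [List.getElem?_eq_getElem hj, ← List.prefix_iff_getElem?.1 h j hj]
    by_cases hjα : j < α.length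
    · rw [List.getElem?_append_left hjα, Nat.mod_eq_of_lt hjα]
    · rw [List.getElem?_append_right (not_lt.mp hjα), ih _ (by omega) (by omega),
        ← Nat.mod_eq_sub_mod (not_lt.mp hjα)]

theorem length_flatten_replicate_append (n : ℕ) :
    ((List.replicate n α).flatten ++ β).length = n * α.length + β.length := by
  simp [List.length_flatten, List.sum_replicate]

theorem getElem?_flatten_replicate_append (hα : α ≠ []) (h : β <+: α ++ β) (n : ℕ) :
    ∀ i < n * α.length + β.length, ((List.replicate n α).flatten ++ β)[i]? = α[i % α.length]? := by
  induction n with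
  | zero => simpa using getElem?_eq_getElem?_mod_of_prefix_append hα h
  | succ n ih =>
    intro i hi
    rw [List.replicate_succ, List.flatten_cons, List.append_assoc]
    by_cases hiα : i < α.length
    · rw [List.getElem?_append_left hiα, Nat.mod_eq_of_lt hiα]
    · rw [List.getElem?_append_right (not_lt.mp hiα), ih _ (by rw [add_one_mul] at hi; omega),
        ← Nat.mod_eq_sub_mod (not_lt.mp hiα)]

theorem flatten_replicate_append_injective (hα : α ≠ []) :
    Function.Injective fun n => (List.replicate n α).flatten ++ β := by
  intro m n hmn
  have := congrArg List.length hmn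
  simp only [length_flatten_replicate_append, add_left_inj] at this
  exact Nat.eq_of_mul_eq_mul_right (List.length_pos_iff.mpr hα) this

theorem occCount_flatten_replicate_append [DecidableEq A] {m : ℕ} (hα : α ≠ [])
    (h : β <+: α ++ β) (hm : β.length + 1 = m) {n : ℕ} (hn : n ≠ 0) (φ : Fin m → A) :
    occCount m ((List.replicate n α).flatten ++ β) φ = n * occCount m (α ++ β) φ := by
  have hp : 0 < α.length := List.length_pos_iff.mpr hα
  have hnp : 0 < n * α.length := Nat.mul_pos (Nat.pos_of_ne_zero hn) hp
  have hαβ : ∀ i < α.length + β.length, (α ++ β)[i]? = α[i % α.length]? := by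
    simpa using getElem?_flatten_replicate_append hα h 1
  have hocc : ∀ i < n * α.length, OccursAt ((List.replicate n α).flatten ++ β) φ i ↔
      OccursAt (α ++ β) φ (i % α.length) := fun i hi => forall_congr' fun j => by
    have := Nat.mod_lt i hp
    rw [getElem?_flatten_replicate_append hα h n _ (by omega), hαβ _ (by omega), Nat.mod_add_mod]
  rw [occCount, occCount, length_flatten_replicate_append, List.length_append,
    show n * α.length + β.length - m + 1 = n * α.length by omega,
    show α.length + β.length - m + 1 = α.length by omega, ← card_filter_mod_range_mul]
  congr 1
  exact Finset.filter_congr fun i hi => hocc i (Finset.mem_range.mp hi)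

theorem freq_flatten_replicate_append [DecidableEq A] {m n : ℕ} (hα : α ≠ [])
    (h : β <+: α ++ β) (hm : β.length + 1 = m) (hn : n ≠ 0) :
    freq m ((List.replicate n α).flatten ++ β) = freq m (α ++ β) := by
  have hp : 0 < α.length := List.length_pos_iff.mpr hα
  have hnp : 0 < n * α.length := Nat.mul_pos (Nat.pos_of_ne_zero hn) hp
  funext φ
  rw [freq, freq, occCount_flatten_replicate_append hα h hm hn, length_flatten_replicate_append,
    List.length_append, show n * α.length + β.length - m + 1 = n * α.length by omega,
    show α.length + β.length - m + 1 = α.length by omega]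
  push_cast
  exact mul_div_mul_left _ _ (by positivity)

end Periodic

theorem capacity_nonneg {A : Type*} (T : Set (List A)) : 0 ≤ capacity T := by
  -- No boundedness is needed: an unbounded limsup is the junk value `sInf ∅ = 0`.
  rw [capacity, Filter.limsup_eq]
  refine Real.sInf_nonneg fun x hx => ?_
  obtain ⟨n, hn⟩ := hx.exists
  exact le_trans (div_nonneg (div_nonneg (Real.log_natCast_nonneg _) (Real.log_nonneg one_le_two))
    n.cast_nonneg) hn

theorem stmt17_general {A : Type*} [Fintype A] [DecidableEq A] (k : ℕ)
    (Γ : Set ((Fin (k + 2) → A) → ℝ))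
    (hΓ : ∀ η ∈ Γ, IsProbVec η ∧ ShiftInv k η)
    (ω : List A) (hlen : k + 2 ≤ ω.length) (hmem : freq (k + 2) ω ∈ Γ) :
    (∀ n : ℕ, 1 ≤ n →
      k + 2 ≤ ((List.replicate n (ω.take (ω.length - (k + 1)))).flatten ++
          ω.drop (ω.length - (k + 1))).length ∧
      freq (k + 2) ((List.replicate n (ω.take (ω.length - (k + 1)))).flatten ++
          ω.drop (ω.length - (k + 1))) ∈ Γ) ∧
    {ω' : List A | k + 2 ≤ ω'.length ∧ freq (k + 2) ω' ∈ Γ}.Infinite ∧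
    0 ≤ capacity {ω' : List A | k + 2 ≤ ω'.length ∧ freq (k + 2) ω' ∈ Γ} := by
  set α := ω.take (ω.length - (k + 1))
  set β := ω.drop (ω.length - (k + 1))
  have hω : α ++ β = ω := List.take_append_drop _ ω
  have hα : α ≠ [] := by
    simp only [α, ne_eq, List.take_eq_nil_iff, not_or]
    exact ⟨by omega, List.ne_nil_of_length_pos (by omega)⟩
  have hβ : β.length + 1 = k + 2 := by simp only [β, List.length_drop]; omega
  have hpre : β <+: α ++ β := hω ▸ drop_isPrefix_of_shiftInv hlen (hΓ _ hmem).2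
  have hword : ∀ n : ℕ, 1 ≤ n → k + 2 ≤ ((List.replicate n α).flatten ++ β).length ∧
      freq (k + 2) ((List.replicate n α).flatten ++ β) ∈ Γ := fun n hn => by
    have : 0 < n * α.length := Nat.mul_pos hn (List.length_pos_iff.mpr hα)
    refine ⟨by rw [length_flatten_replicate_append]; omega, ?_⟩
    rwa [freq_flatten_replicate_append hα hpre hβ (by omega), hω]
  refine ⟨hword, Set.infinite_of_injective_forall_mem ?_ fun n => hword (n + 1) n.succ_pos,
    capacity_nonneg _⟩
  exact (flatten_replicate_append_injective hα).comp (add_left_injective 1)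

theorem stmt17 {A : Type*} [Fintype A] [DecidableEq A] (k : ℕ)
    (Γ : Set ((Fin (k + 2) → A) → ℝ))
    (hΓ : ∀ η ∈ Γ, IsProbVec η ∧ ShiftInv k η) (hconv : Convex ℝ Γ)
    (ω : List A) (hlen : k + 2 ≤ ω.length) (hmem : freq (k + 2) ω ∈ Γ) :
    (∀ n : ℕ, 1 ≤ n →
      k + 2 ≤ ((List.replicate n (ω.take (ω.length - (k + 1)))).flatten ++
          ω.drop (ω.length - (k + 1))).length ∧
      freq (k + 2) ((List.replicate n (ω.take (ω.length - (k + 1)))).flatten ++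
          ω.drop (ω.length - (k + 1))) ∈ Γ) ∧
    {ω' : List A | k + 2 ≤ ω'.length ∧ freq (k + 2) ω' ∈ Γ}.Infinite ∧
    0 ≤ capacity {ω' : List A | k + 2 ≤ ω'.length ∧ freq (k + 2) ω' ∈ Γ} :=
  stmt17_general k Γ hΓ ω hlen hmem
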